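/- Suppose N > 0 and there exist positive semidefinite infinite matrices Γ' and Δ' such that N − δ_{ij} = Γ'_{ij}(1 − conj(λ_i¹)λ_j¹) + Δ'_{ij}(1 − conj(λ_i²)λ_j²) for all i, j, where {λ_i} is a sequence in 𝔻². Then for every admissible kernel k on 𝔻², the normalized Gram matrix G^k satisfies N·G^k ≥ I (i.e., N·G^k_{ij} − δ_{ij} is a positive semidefinite matrix). -/

import Mathlib

open scoped ComplexConjugate ComplexOrder

/-- The open bidisk in `ℂ²`. -/
def Bidisk : Set (ℂ × ℂ) := {z | ‖z.1‖ < 1 ∧ ‖z.2‖ < 1}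

/-- An infinite matrix is positive semidefinite if all its finite quadratic forms
are nonnegative. -/
def IsPSDMatrix (A : ℕ → ℕ → ℂ) : Prop :=
  ∀ (s : Finset ℕ) (c : ℕ → ℂ), 0 ≤ ∑ i ∈ s, ∑ j ∈ s, conj (c i) * c j * A i j

/-- A kernel on the bidisk is positive semidefinite. -/
def IsPSDKernel (k : (ℂ × ℂ) → (ℂ × ℂ) → ℂ) : Prop :=
  ∀ (n : ℕ) (p : Fin n → ℂ × ℂ), (∀ i, p i ∈ Bidisk) →
    ∀ c : Fin n → ℂ, 0 ≤ ∑ i, ∑ j, conj (c i) * c j * k (p i) (p j)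

/-- A kernel on the bidisk is admissible if it is positive semidefinite and multiplication
by each coordinate function is a contraction. -/
def IsAdmissibleKernel (k : (ℂ × ℂ) → (ℂ × ℂ) → ℂ) : Prop :=
  IsPSDKernel k ∧
  IsPSDKernel (fun l z => (1 - conj l.1 * z.1) * k l z) ∧
  IsPSDKernel (fun l z => (1 - conj l.2 * z.2) * k l z)

/-! Since
`(N - δᵢⱼ) k(λᵢ, λⱼ) = Γ'ᵢⱼ (1 - conj λᵢ¹ λⱼ¹) k(λᵢ, λⱼ) + Δ'ᵢⱼ (1 - conj λᵢ² λⱼ²) k(λᵢ, λⱼ)`,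
the Schur product theorem applied to `Γ'`, `Δ'` and the two kernels witnessing admissibility
shows that `((N - δᵢⱼ) k(λᵢ, λⱼ))` is positive semidefinite. Conjugating it by the diagonal
matrix `diag(k(λᵢ, λᵢ)^{-1/2})` gives exactly `N G^k - I`. -/

open Matrix

-- Over `ℂ` the Hermitian condition is automatic, by polarization.
theorem Matrix.posSemidef_of_dotProduct_mulVec_nonneg_complex {n : Type*} [Fintype n]
    {A : Matrix n n ℂ} (hA : ∀ x, 0 ≤ star x ⬝ᵥ (A *ᵥ x)) : A.PosSemidef := by
  classical
  rw [← isPositive_toEuclideanLin_iff, LinearMap.isPositive_iff_complex]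
  intro x
  obtain ⟨hre, him⟩ := Complex.nonneg_iff.mp (hA x)
  simp only [toLpLin_apply, EuclideanSpace.inner_eq_star_dotProduct, dotProduct_star,
    dotProduct_comm (A *ᵥ _)]
  refine ⟨Complex.ext ?_ ?_, ?_⟩ <;> simp [← him, hre]

lemma Matrix.star_dotProduct_submatrix_mulVec {ι : Type*} (A : ι → ι → ℂ) (s : Finset ι)
    (c : ι → ℂ) :
    star (fun i : s => c i) ⬝ᵥ ((of A).submatrix (↑) (↑) *ᵥ fun i : s => c i) =
      ∑ i ∈ s, ∑ j ∈ s, conj (c i) * c j * A i j := by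
  simp_rw [← Finset.sum_coe_sort s, dotProduct, mulVec, dotProduct, Finset.mul_sum]
  refine Finset.sum_congr rfl fun i _ => Finset.sum_congr rfl fun j _ => ?_
  simp only [submatrix_apply, of_apply, Pi.star_apply, RCLike.star_def]
  ring

lemma IsPSDMatrix.posSemidef_submatrix {A : ℕ → ℕ → ℂ} (hA : IsPSDMatrix A) (s : Finset ℕ) :
    (of A).submatrix ((↑) : s → ℕ) (↑) |>.PosSemidef := by
  refine posSemidef_of_dotProduct_mulVec_nonneg_complex fun x => ?_
  let c : ℕ → ℂ := fun n => if h : n ∈ s then x ⟨n, h⟩ else 0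
  have hc : (fun i : s => c i) = x := by simp [c]
  have h := hA s c
  rwa [← star_dotProduct_submatrix_mulVec, hc] at h

lemma isPSDMatrix_iff_posSemidef {A : ℕ → ℕ → ℂ} :
    IsPSDMatrix A ↔ (of A).PosSemidef := by
  refine ⟨fun hA => ⟨IsHermitian.ext fun i j => ?_, fun x => ?_⟩, fun hA s c => ?_⟩
  · simpa using ((hA.posSemidef_submatrix {i, j}).isHermitian.apply ⟨i, by simp⟩ ⟨j, by simp⟩)
  · simpa [Finsupp.sum, mul_comm, mul_left_comm] using hA x.support x
  · simpa [star_dotProduct_submatrix_mulVec] using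
      (hA.submatrix ((↑) : s → ℕ)).dotProduct_mulVec_nonneg (fun i => c i)

namespace IsPSDMatrix

variable {A B : ℕ → ℕ → ℂ}

protected lemma add (hA : IsPSDMatrix A) (hB : IsPSDMatrix B) :
    IsPSDMatrix fun i j => A i j + B i j := fun s c => by
  simpa only [mul_add, Finset.sum_add_distrib] using add_nonneg (hA s c) (hB s c)

lemma hadamard (hA : IsPSDMatrix A) (hB : IsPSDMatrix B) :
    IsPSDMatrix fun i j => A i j * B i j :=
  isPSDMatrix_iff_posSemidef.mpr <|
    (isPSDMatrix_iff_posSemidef.mp hA).hadamard (isPSDMatrix_iff_posSemidef.mp hB)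

lemma conj_mul_mul (hA : IsPSDMatrix A) (w : ℕ → ℂ) :
    IsPSDMatrix fun i j => conj (w i) * w j * A i j := fun s c => by
  simpa only [map_mul, mul_assoc, mul_left_comm] using hA s fun i => c i * w i

lemma normalize_of_sub_ite_mul {M : ℕ → ℕ → ℂ} {r : ℕ → ℝ} (hr : ∀ i, r i ≠ 0)
    (hM : ∀ i, M i i = (r i : ℂ) ^ 2) {N : ℂ}
    (h : IsPSDMatrix fun i j => (N - if i = j then 1 else 0) * M i j) :
    IsPSDMatrix fun i j => N * (M i j / ((r i * r j : ℝ) : ℂ)) - if i = j then 1 else 0 := by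
  have hδ : ∀ i j, (if i = j then 1 else 0 : ℂ) =
      (r i : ℂ)⁻¹ * (r j : ℂ)⁻¹ * ((if i = j then 1 else 0) * M i j) := by
    intro i j
    split_ifs with hij
    · subst hij
      rw [hM]
      field_simp [hr i]
    · simp
  convert h.conj_mul_mul fun i => (r i : ℂ)⁻¹ using 1
  funext i j
  conv_lhs => rw [hδ i j]
  simp only [map_inv₀, Complex.conj_ofReal, Complex.ofReal_mul]
  ring

end IsPSDMatrix

lemma IsPSDKernel.isPSDMatrix_comp {K : (ℂ × ℂ) → (ℂ × ℂ) → ℂ} (hK : IsPSDKernel K)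
    {p : ℕ → ℂ × ℂ} (hp : ∀ i, p i ∈ Bidisk) : IsPSDMatrix fun i j => K (p i) (p j) := by
  intro s c
  simp_rw [← Finset.sum_coe_sort s, ← s.equivFin.symm.sum_comp]
  exact hK s.card (fun m => p (s.equivFin.symm m)) (fun m => hp _)
    (fun m => c (s.equivFin.symm m))

theorem gram_lower_bound_of_decomposition_general
    (l : ℕ → ℂ × ℂ) (hl : ∀ i, l i ∈ Bidisk) (N : ℝ)
    (Γ' Δ' : ℕ → ℕ → ℂ) (hΓ : IsPSDMatrix Γ') (hΔ : IsPSDMatrix Δ')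
    (hdec : ∀ i j, (N : ℂ) - (if i = j then 1 else 0) =
      Γ' i j * (1 - conj (l i).1 * (l j).1) + Δ' i j * (1 - conj (l i).2 * (l j).2))
    (k : (ℂ × ℂ) → (ℂ × ℂ) → ℂ) (hk : IsAdmissibleKernel k)
    (hdiag : ∀ i, 0 < (k (l i) (l i)).re ∧ (k (l i) (l i)).im = 0) :
    IsPSDMatrix (fun i j =>
      (N : ℂ) * (k (l i) (l j) /
          ((Real.sqrt ((k (l i) (l i)).re) * Real.sqrt ((k (l j) (l j)).re) : ℝ) : ℂ)) -
        (if i = j then 1 else 0)) := by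
  have hweighted : IsPSDMatrix fun i j => ((N : ℂ) - if i = j then 1 else 0) * k (l i) (l j) := by
    convert (hΓ.hadamard (hk.2.1.isPSDMatrix_comp hl)).add
      (hΔ.hadamard (hk.2.2.isPSDMatrix_comp hl)) using 1
    funext i j
    rw [hdec]
    ring
  refine hweighted.normalize_of_sub_ite_mul (fun i => (Real.sqrt_pos.mpr (hdiag i).1).ne') ?_
  intro i
  rw [← Complex.ofReal_pow, Real.sq_sqrt (hdiag i).1.le]
  exact Complex.ext rfl (by simp [(hdiag i).2])

/-- Condition (b') implies condition (b): if `N − δ_{ij}` decomposes as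
`Γ'_{ij}(1 − conj(λ_i¹)λ_j¹) + Δ'_{ij}(1 − conj(λ_i²)λ_j²)` with `Γ', Δ' ⪰ 0`, then for
every admissible kernel `k` the normalized Gram matrix satisfies `N·G^k ≥ I`. -/
theorem gram_lower_bound_of_decomposition
    (l : ℕ → ℂ × ℂ) (hl : ∀ i, l i ∈ Bidisk) (N : ℝ) (hN : 0 < N)
    (Γ' Δ' : ℕ → ℕ → ℂ) (hΓ : IsPSDMatrix Γ') (hΔ : IsPSDMatrix Δ')
    (hdec : ∀ i j, (N : ℂ) - (if i = j then 1 else 0) =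
      Γ' i j * (1 - conj (l i).1 * (l j).1) + Δ' i j * (1 - conj (l i).2 * (l j).2))
    (k : (ℂ × ℂ) → (ℂ × ℂ) → ℂ) (hk : IsAdmissibleKernel k)
    (hdiag : ∀ i, 0 < (k (l i) (l i)).re ∧ (k (l i) (l i)).im = 0) :
    IsPSDMatrix (fun i j =>
      (N : ℂ) * (k (l i) (l j) /
          ((Real.sqrt ((k (l i) (l i)).re) * Real.sqrt ((k (l j) (l j)).re) : ℝ) : ℂ)) -
        (if i = j then 1 else 0)) :=
  gram_lower_bound_of_decomposition_general l hl N Γ' Δ' hΓ hΔ hdec k hk hdiag
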